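/- Under randomization, monotonicity, principal ignorability, and the positivity condition, for every z ∈ {1,...,J} and every g ∈ {J−z+1,...,J}: E[Y_z·1(G=g)] = E[(S·1(Z=J−g+1)/π_{J−g+1} − S·1(Z=J−g)/π_{J−g})·m_z(X)], where for g = J the term S·1(Z=0)/π_0 is taken to be 0. -/

import Mathlib

open MeasureTheory ProbabilityTheory

noncomputable section

namespace TruncationByDeath

variable {Ω : Type*} {𝒳 : Type*} [MeasurableSpace Ω] [MeasurableSpace 𝒳]

/-- The σ-algebra on `Ω` generated by the covariate map `X`. -/
def mX (X : Ω → 𝒳) : MeasurableSpace Ω := MeasurableSpace.comap X inferInstance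

/-- Real-valued indicator of the event `{Z = z}`. -/
def indic (Z : Ω → ℕ) (z : ℕ) : Ω → ℝ := fun ω => if Z ω = z then 1 else 0

/-- Observed survival status `S := ∑_z 1(Z=z) ⬝ S_z`. -/
def Sobs (J : ℕ) (Z : Ω → ℕ) (S : ℕ → Ω → ℝ) : Ω → ℝ :=
  fun ω => ∑ z ∈ Finset.Icc 1 J, indic Z z ω * S z ω

/-- Observed outcome `Y := ∑_z 1(Z=z) ⬝ Y_z`. -/
def Yobs (J : ℕ) (Z : Ω → ℕ) (Y : ℕ → Ω → ℝ) : Ω → ℝ :=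
  fun ω => ∑ z ∈ Finset.Icc 1 J, indic Z z ω * Y z ω

/-- Principal score `p_z(X) := E[S_z | σ(X)]`, with conventions `p_0 := 0` and `p_{J+1} := 1`. -/
def pscore (P : Measure Ω) (X : Ω → 𝒳) (S : ℕ → Ω → ℝ) (J : ℕ) (z : ℕ) : Ω → ℝ :=
  if z = 0 then fun _ => 0 else if z = J + 1 then fun _ => 1 else P[S z | mX X]

/-- Treatment probability `π_z := P(Z = z)`. -/
def piZ (P : Measure Ω) (Z : Ω → ℕ) (z : ℕ) : ℝ := (P {ω | Z ω = z}).toReal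

/-- Principal stratum variable `G := ∑_{z=1}^J S_z`. -/
def Gsum (J : ℕ) (S : ℕ → Ω → ℝ) : Ω → ℝ := fun ω => ∑ z ∈ Finset.Icc 1 J, S z ω

/-- Real-valued indicator of the event `{G = g}`. -/
def indG (J : ℕ) (S : ℕ → Ω → ℝ) (g : ℕ) : Ω → ℝ :=
  Set.indicator {ω | Gsum J S ω = (g : ℝ)} (fun _ => (1 : ℝ))

/-- Principal score of the stratum `g` : `e_g(X) := E[1(G=g) | σ(X)]`. -/
def eg (P : Measure Ω) (X : Ω → 𝒳) (J : ℕ) (S : ℕ → Ω → ℝ) (g : ℕ) : Ω → ℝ :=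
  P[indG J S g | mX X]

/-- Basic setup: measurability, ranges, values and integrability of the primitives. -/
structure Setup (P : Measure Ω) (J : ℕ) (X : Ω → 𝒳) (Z : Ω → ℕ)
    (S Y : ℕ → Ω → ℝ) : Prop where
  hJ : 2 ≤ J
  hX : Measurable X
  hZ : Measurable Z
  hZr : ∀ ω, Z ω ∈ Finset.Icc 1 J
  hSm : ∀ z, Measurable (S z)
  hS01 : ∀ z ω, S z ω = 0 ∨ S z ω = 1
  hYm : ∀ z, Measurable (Y z)
  hYint : ∀ z, Integrable (Y z) P

/-- Randomization : `Z` is independent of `(X, S_1,…,S_J, Y_1,…,Y_J)` and `π_z > 0` for all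
`z ∈ {1,…,J}`. -/
def Randomization (P : Measure Ω) (J : ℕ) (X : Ω → 𝒳) (Z : Ω → ℕ)
    (S Y : ℕ → Ω → ℝ) : Prop :=
  IndepFun Z (fun ω => (X ω, fun z => S z ω, fun z => Y z ω)) P ∧
    ∀ z ∈ Finset.Icc 1 J, 0 < piZ P Z z

/-- Monotonicity : `S_{z'} ≤ S_z` a.s. whenever `z' ≤ z`. -/
def Monotonicity (P : Measure Ω) (J : ℕ) (S : ℕ → Ω → ℝ) : Prop :=
  ∀ z ∈ Finset.Icc 1 J, ∀ z' ∈ Finset.Icc 1 J, z' ≤ z → ∀ᵐ ω ∂P, S z' ω ≤ S z ω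

/-- Principal ignorability. -/
def PrincipalIgnorability (P : Measure Ω) (J : ℕ) (X : Ω → 𝒳)
    (S Y : ℕ → Ω → ℝ) : Prop :=
  ∀ z ∈ Finset.Icc 1 J, ∀ g ∈ Finset.Icc (J - z + 1) J, ∀ g' ∈ Finset.Icc (J - z + 1) J,
    (fun ω => (P[fun ω' => Y z ω' * indG J S g ω' | mX X]) ω * eg P X J S g' ω)
      =ᵐ[P] fun ω => (P[fun ω' => Y z ω' * indG J S g' ω' | mX X]) ω * eg P X J S g ω

/-- Positivity : the principal scores are uniformly bounded away from zero. -/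
def Positivity (P : Measure Ω) (J : ℕ) (X : Ω → 𝒳) (S : ℕ → Ω → ℝ) : Prop :=
  ∃ c : ℝ, 0 < c ∧ ∀ z ∈ Finset.Icc 1 J, ∀ᵐ ω ∂P, c ≤ pscore P X S J z ω

/-- Weighted survival term `S·1(Z=w)/π_w`, with the convention that it is `0` for `w = 0`. -/
def wterm (P : Measure Ω) (J : ℕ) (Z : Ω → ℕ) (S : ℕ → Ω → ℝ) (w : ℕ) : Ω → ℝ :=
  if w = 0 then fun _ => 0
  else fun ω => Sobs J Z S ω * indic Z w ω / piZ P Z w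

end TruncationByDeath

/-!
Under monotonicity the potential survivals `S_1 ≤ ⋯ ≤ S_J` form a step function of `z` jumping at
`J - G + 1`; hence `1(G = g) = S_{J-g+1} - S_{J-g}` (with `S_0 = 0`) and
`S_z = ∑_{g ≥ J-z+1} 1(G = g)`. Randomization factors `E[Y S 1(Z=z) | X] = π_z E[Y_z S_z | X]`,
so `m_z p_z = E[Y_z S_z | X]`. Principal ignorability makes `E[Y_z 1(G=g) | X] / e_g` the same
for all strata `g` that survive under `z`; summing over them, this common ratio is
`E[Y_z S_z | X] / p_z = m_z`. Hence `E[Y_z 1(G=g)] = E[m_z e_g] = E[m_z (S_{J-g+1} - S_{J-g})]`,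
and randomization once more turns each `E[m_z S_w]` into `E[m_z S 1(Z=w) / π_w]`.
-/

open Finset

namespace MeasureTheory

variable {Ω : Type*}

theorem condExp_mul_ae_eq_of_indep {m m' mh mΩ : MeasurableSpace Ω} {μ : Measure Ω}
    [IsFiniteMeasure μ] (hm : m ≤ m') (hm' : m' ≤ mΩ) (hmh : mh ≤ mΩ) {f h : Ω → ℝ}
    (hf : StronglyMeasurable[m'] f) (hh : StronglyMeasurable[mh] h) (hindep : Indep mh m' μ)
    (hfh : Integrable (f * h) μ) (hhi : Integrable h μ) :
    μ[f * h | m] =ᵐ[μ] fun ω => μ[h] * μ[f | m] ω := by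
  have hm'h : μ[f * h | m'] =ᵐ[μ] fun ω => μ[h] * f ω := by
    filter_upwards [condExp_mul_of_stronglyMeasurable_left hf hfh hhi,
      condExp_indep_eq hmh hm' hh hindep] with ω h₁ h₂
    rw [h₁, Pi.mul_apply, h₂, mul_comm]
  calc μ[f * h | m] =ᵐ[μ] μ[μ[f * h | m'] | m] := (condExp_condExp_of_le hm hm').symm
    _ =ᵐ[μ] μ[fun ω => μ[h] * f ω | m] := condExp_congr_ae hm'h
    _ =ᵐ[μ] fun ω => μ[h] * μ[f | m] ω := condExp_smul (μ[h]) f m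

theorem integral_mul_eq_of_indep {m' mh mΩ : MeasurableSpace Ω} {μ : Measure Ω}
    [IsFiniteMeasure μ] (hm' : m' ≤ mΩ) (hmh : mh ≤ mΩ) {f h : Ω → ℝ}
    (hf : StronglyMeasurable[m'] f) (hh : StronglyMeasurable[mh] h) (hindep : Indep mh m' μ)
    (hfh : Integrable (f * h) μ) (hhi : Integrable h μ) :
    ∫ ω, f ω * h ω ∂μ = μ[h] * μ[f] := by
  calc ∫ ω, f ω * h ω ∂μ = ∫ ω, μ[f * h | m'] ω ∂μ := (integral_condExp hm').symm
    _ = ∫ ω, μ[h] * μ[f | m'] ω ∂μ :=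
        integral_congr_ae (condExp_mul_ae_eq_of_indep le_rfl hm' hmh hf hh hindep hfh hhi)
    _ = μ[h] * μ[f] := by rw [integral_const_mul, integral_condExp hm']

theorem integral_mul_condExp {m mΩ : MeasurableSpace Ω} {μ : Measure Ω} (hm : m ≤ mΩ)
    [SigmaFinite (μ.trim hm)] {f g : Ω → ℝ} (hf : StronglyMeasurable[m] f)
    (hfg : Integrable (f * g) μ) (hg : Integrable g μ) :
    ∫ ω, f ω * μ[g | m] ω ∂μ = ∫ ω, f ω * g ω ∂μ :=
  (integral_congr_ae (condExp_mul_of_stronglyMeasurable_left hf hfg hg)).symm.trans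
    (integral_condExp hm)

theorem condExp_sum_ae_eq {ι : Type*} {m mΩ : MeasurableSpace Ω} {μ : Measure Ω}
    {s : Finset ι} {f : ι → Ω → ℝ} (hf : ∀ i ∈ s, Integrable (f i) μ) :
    μ[fun ω => ∑ i ∈ s, f i ω | m] =ᵐ[μ] fun ω => ∑ i ∈ s, μ[f i | m] ω := by
  have h := condExp_finsetSum hf m
  simp only [← Finset.sum_fn] at h ⊢
  exact h

theorem Integrable.of_mul_of_le [MeasurableSpace Ω] {μ : Measure Ω} {f g : Ω → ℝ} {c : ℝ}
    (hc : 0 < c) (hfg : Integrable (fun ω => f ω * g ω) μ) (hg : AEStronglyMeasurable g μ)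
    (hcg : ∀ᵐ ω ∂μ, c ≤ g ω) : Integrable f μ := by
  refine (hfg.mul_bdd (c := c⁻¹) hg.aemeasurable.inv.aestronglyMeasurable ?_).congr ?_
  · filter_upwards [hcg] with ω hω
    rw [Pi.inv_apply, norm_inv, Real.norm_of_nonneg (hc.le.trans hω)]
    exact inv_anti₀ hc hω
  · filter_upwards [hcg] with ω hω
    rw [Pi.inv_apply, mul_inv_cancel_right₀ (hc.trans_le hω).ne']

end MeasureTheory

theorem eq_ite_card_of_monotoneOn {J : ℕ} {f : ℕ → ℝ} (h01 : ∀ k, f k = 0 ∨ f k = 1)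
    (hf : MonotoneOn f (Icc 1 J : Set ℕ)) {w : ℕ} (hw : w ∈ Icc 1 J) :
    f w = if J + 1 ≤ w + #{k ∈ Icc 1 J | f k = 1} then 1 else 0 := by
  have hw' := mem_Icc.mp hw
  rcases h01 w with h | h
  · have hsub : {k ∈ Icc 1 J | f k = 1} ⊆ Icc (w + 1) J := by
      intro k hk
      obtain ⟨hkJ, hk1⟩ := mem_filter.mp hk
      refine mem_Icc.mpr ⟨?_, (mem_Icc.mp hkJ).2⟩
      by_contra! hkw
      have := hf (by simpa using hkJ) (by simpa using hw) (Nat.lt_succ_iff.mp hkw)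
      linarith
    have := card_le_card hsub
    rw [Nat.card_Icc] at this
    rw [h, if_neg (by omega)]
  · have hsub : Icc w J ⊆ {k ∈ Icc 1 J | f k = 1} := by
      intro k hk
      have hk' := mem_Icc.mp hk
      have hkJ : k ∈ Icc 1 J := mem_Icc.mpr ⟨hw'.1.trans hk'.1, hk'.2⟩
      refine mem_filter.mpr ⟨hkJ, ?_⟩
      have := hf (by simpa using hw) (by simpa using hkJ) hk'.1
      rcases h01 k with h' | h' <;> linarith
    have := card_le_card hsub
    rw [Nat.card_Icc] at this
    rw [h, if_pos (by omega)]

namespace TruncationByDeath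

variable {Ω : Type*} {𝒳 : Type*}

def stratum (J : ℕ) (S : ℕ → Ω → ℝ) (ω : Ω) : ℕ := #{k ∈ Icc 1 J | S k ω = 1}

/-- `S_w` with the convention `S_0 = 0`, matching `p_0 = 0` and the case `w = 0` of `wterm`. -/
def survivalExt (S : ℕ → Ω → ℝ) (w : ℕ) : Ω → ℝ := if w = 0 then 0 else S w

def mXSY [MeasurableSpace 𝒳] (X : Ω → 𝒳) (S Y : ℕ → Ω → ℝ) : MeasurableSpace Ω :=
  MeasurableSpace.comap (fun ω => (X ω, fun z => S z ω, fun z => Y z ω)) inferInstance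

section Strata

variable {J : ℕ} {S : ℕ → Ω → ℝ}

theorem stratum_le (ω : Ω) : stratum J S ω ≤ J := by
  simpa [stratum] using card_filter_le (Icc 1 J) (fun k => S k ω = 1)

theorem Gsum_eq_stratum (h01 : ∀ z ω, S z ω = 0 ∨ S z ω = 1) (ω : Ω) :
    Gsum J S ω = stratum J S ω := by
  rw [Gsum, stratum, natCast_card_filter]
  refine sum_congr rfl fun k _ => ?_
  rcases h01 k ω with h | h <;> simp [h]

theorem indG_eq_ite (h01 : ∀ z ω, S z ω = 0 ∨ S z ω = 1) (g : ℕ) (ω : Ω) :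
    indG J S g ω = if stratum J S ω = g then 1 else 0 := by
  simp only [indG, Set.indicator_apply, Set.mem_ofPred_eq, Gsum_eq_stratum h01, Nat.cast_inj]

theorem ae_monotoneOn [MeasurableSpace Ω] {P : Measure Ω} (hmono : Monotonicity P J S) :
    ∀ᵐ ω ∂P, MonotoneOn (fun k => S k ω) (Icc 1 J : Set ℕ) := by
  have h : ∀ᵐ ω ∂P, ∀ z ∈ Icc 1 J, ∀ z' ∈ Icc 1 J, z' ≤ z → S z' ω ≤ S z ω := by
    simpa only [Monotonicity, Filter.eventually_all_finset,
      Filter.eventually_imp_distrib_left] using hmono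
  filter_upwards [h] with ω hω
  exact fun z' hz' z hz hle => hω z (by simpa using hz) z' (by simpa using hz') hle

theorem survivalExt_eq_ite (h01 : ∀ z ω, S z ω = 0 ∨ S z ω = 1) {ω : Ω}
    (hmon : MonotoneOn (fun k => S k ω) (Icc 1 J : Set ℕ)) {w : ℕ} (hw : w ≤ J) :
    survivalExt S w ω = if J + 1 ≤ w + stratum J S ω then 1 else 0 := by
  by_cases hw0 : w = 0
  · have := stratum_le (J := J) (S := S) ω
    simp [survivalExt, hw0, show ¬ J + 1 ≤ stratum J S ω by omega]
  · simp only [survivalExt, if_neg hw0]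
    exact eq_ite_card_of_monotoneOn (fun k => h01 k ω) hmon (mem_Icc.mpr ⟨by omega, hw⟩)

theorem indG_ae_eq_sub [MeasurableSpace Ω] {P : Measure Ω}
    (h01 : ∀ z ω, S z ω = 0 ∨ S z ω = 1) (hmono : Monotonicity P J S) {g : ℕ} (hg : g ∈ Icc 1 J) :
    indG J S g =ᵐ[P] fun ω => survivalExt S (J - g + 1) ω - survivalExt S (J - g) ω := by
  filter_upwards [ae_monotoneOn hmono] with ω hω
  have := stratum_le (J := J) (S := S) ω
  have hg' := mem_Icc.mp hg
  rw [indG_eq_ite h01, survivalExt_eq_ite h01 hω (by omega),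
    survivalExt_eq_ite h01 hω (by omega)]
  split_ifs <;> first | omega | norm_num

theorem survival_ae_eq_sum_indG [MeasurableSpace Ω] {P : Measure Ω}
    (h01 : ∀ z ω, S z ω = 0 ∨ S z ω = 1) (hmono : Monotonicity P J S) {z : ℕ} (hz : z ∈ Icc 1 J) :
    S z =ᵐ[P] fun ω => ∑ g ∈ Icc (J - z + 1) J, indG J S g ω := by
  filter_upwards [ae_monotoneOn hmono] with ω hω
  have := stratum_le (J := J) (S := S) ω
  have hz' := mem_Icc.mp hz
  have h := survivalExt_eq_ite h01 hω hz'.2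
  rw [survivalExt, if_neg (by omega)] at h
  simp only [indG_eq_ite h01, sum_ite_eq, mem_Icc, h]
  split_ifs <;> first | rfl | omega

end Strata

theorem observed_mul_indic {J w : ℕ} {Z : Ω → ℕ} (F : ℕ → Ω → ℝ) (hw : w ∈ Icc 1 J) (ω : Ω) :
    (∑ z ∈ Icc 1 J, indic Z z ω * F z ω) * indic Z w ω = F w ω * indic Z w ω := by
  by_cases h : Z ω = w
  · simp [indic, h, hw]
  · simp [indic, h]

theorem Yobs_mul_Sobs_mul_indic {J z : ℕ} {Z : Ω → ℕ} {S Y : ℕ → Ω → ℝ} (hz : z ∈ Icc 1 J)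
    (ω : Ω) : Yobs J Z Y ω * Sobs J Z S ω * indic Z z ω = Y z ω * S z ω * indic Z z ω := by
  by_cases h : Z ω = z
  · simp [Yobs, Sobs, indic, h, hz]
  · simp [indic, h]

theorem norm_indic_le_one {Z : Ω → ℕ} {w : ℕ} {ω : Ω} : ‖indic Z w ω‖ ≤ 1 := by
  unfold indic
  split_ifs <;> simp

theorem norm_indG_le_one {J g : ℕ} {S : ℕ → Ω → ℝ} {ω : Ω} : ‖indG J S g ω‖ ≤ 1 := by
  unfold indG Set.indicator
  split_ifs <;> simp

theorem norm_le_one_of_zero_or_one {S : ℕ → Ω → ℝ} (h01 : ∀ z ω, S z ω = 0 ∨ S z ω = 1)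
    {z : ℕ} {ω : Ω} : ‖S z ω‖ ≤ 1 := by
  rcases h01 z ω with h | h <;> simp [h]

theorem norm_survivalExt_le_one {S : ℕ → Ω → ℝ} (h01 : ∀ z ω, S z ω = 0 ∨ S z ω = 1)
    {w : ℕ} {ω : Ω} : ‖survivalExt S w ω‖ ≤ 1 := by
  unfold survivalExt
  split_ifs
  · simp
  · exact norm_le_one_of_zero_or_one h01

theorem measurable_comap_indic {Z : Ω → ℕ} (w : ℕ) :
    Measurable[MeasurableSpace.comap Z inferInstance] (indic Z w) :=
  (Measurable.of_discrete (f := fun n : ℕ => if n = w then (1 : ℝ) else 0)).comp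
    (comap_measurable Z)

section SigmaAlgebra

variable [MeasurableSpace 𝒳] {X : Ω → 𝒳} {S Y : ℕ → Ω → ℝ}

theorem measurable_mXSY :
    Measurable[mXSY X S Y] (fun ω => (X ω, fun z => S z ω, fun z => Y z ω)) :=
  comap_measurable _

theorem measurable_mXSY_S (w : ℕ) : Measurable[mXSY X S Y] (S w) :=
  ((measurable_pi_apply w).comp (measurable_fst.comp measurable_snd)).comp measurable_mXSY

theorem measurable_mXSY_Y (w : ℕ) : Measurable[mXSY X S Y] (Y w) :=
  ((measurable_pi_apply w).comp (measurable_snd.comp measurable_snd)).comp measurable_mXSY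

theorem measurable_mXSY_survivalExt (w : ℕ) : Measurable[mXSY X S Y] (survivalExt S w) := by
  unfold survivalExt
  split_ifs
  · exact measurable_const
  · exact measurable_mXSY_S w

theorem mX_le_mXSY : mX X ≤ mXSY X S Y :=
  (measurable_fst.comp measurable_mXSY).comap_le

end SigmaAlgebra

section Model

variable [MeasurableSpace Ω] [MeasurableSpace 𝒳] {P : Measure Ω} {J : ℕ} {X : Ω → 𝒳}
  {Z : Ω → ℕ} {S Y : ℕ → Ω → ℝ}

theorem pscore_of_mem {z : ℕ} (hz : z ∈ Icc 1 J) : pscore P X S J z = P[S z | mX X] := by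
  have hz' := mem_Icc.mp hz
  simp [pscore, show z ≠ 0 by omega, show z ≠ J + 1 by omega]

theorem wterm_eq {w : ℕ} (hw : w ≤ J) :
    wterm P J Z S w = fun ω => (piZ P Z w)⁻¹ * (survivalExt S w ω * indic Z w ω) := by
  funext ω
  by_cases hw0 : w = 0
  · simp [wterm, survivalExt, hw0]
  · simp only [wterm, survivalExt, if_neg hw0, Sobs]
    rw [observed_mul_indic S (mem_Icc.mpr ⟨by omega, hw⟩), div_eq_inv_mul]

theorem measurable_indic (hZ : Measurable Z) (w : ℕ) : Measurable (indic Z w) :=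
  (measurable_comap_indic w).mono hZ.comap_le le_rfl

theorem measurable_indG (hS : ∀ z, Measurable (S z)) (g : ℕ) : Measurable (indG J S g) :=
  measurable_const.indicator ((Finset.measurable_sum _ fun i _ => hS i) (measurableSet_singleton _))

theorem measurable_survivalExt (hS : ∀ z, Measurable (S z)) (w : ℕ) :
    Measurable (survivalExt S w) := by
  unfold survivalExt
  split_ifs
  · exact measurable_const
  · exact hS w

theorem integral_indic (hZ : Measurable Z) (w : ℕ) : ∫ ω, indic Z w ω ∂P = piZ P Z w := by
  have h : indic Z w = Set.indicator (Z ⁻¹' {w}) 1 := by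
    funext ω
    by_cases hω : Z ω = w <;> simp [indic, hω]
  rw [h, integral_indicator_one (hZ (measurableSet_singleton w))]
  rfl

theorem integrable_indic [IsFiniteMeasure P] (hZ : Measurable Z) (w : ℕ) :
    Integrable (indic Z w) P :=
  .of_bound (measurable_indic hZ w).aestronglyMeasurable 1 (ae_of_all _ fun _ => norm_indic_le_one)

theorem integrable_indG [IsFiniteMeasure P] (hS : ∀ z, Measurable (S z)) (g : ℕ) :
    Integrable (indG J S g) P :=
  .of_bound (measurable_indG hS g).aestronglyMeasurable 1 (ae_of_all _ fun _ => norm_indG_le_one)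

theorem integrable_mul_indic (hZ : Measurable Z) {f : Ω → ℝ} (hf : Integrable f P) (w : ℕ) :
    Integrable (fun ω => f ω * indic Z w ω) P :=
  hf.mul_bdd (measurable_indic hZ w).aestronglyMeasurable (ae_of_all _ fun _ => norm_indic_le_one)

theorem integrable_mul_indG (hS : ∀ z, Measurable (S z)) {f : Ω → ℝ} (hf : Integrable f P)
    (g : ℕ) : Integrable (fun ω => f ω * indG J S g ω) P :=
  hf.mul_bdd (measurable_indG hS g).aestronglyMeasurable (ae_of_all _ fun _ => norm_indG_le_one)

theorem integrable_survivalExt_mul (h01 : ∀ z ω, S z ω = 0 ∨ S z ω = 1)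
    (hS : ∀ z, Measurable (S z)) {f : Ω → ℝ} (hf : Integrable f P) (w : ℕ) :
    Integrable (fun ω => survivalExt S w ω * f ω) P :=
  hf.bdd_mul (measurable_survivalExt hS w).aestronglyMeasurable
    (ae_of_all _ fun _ => norm_survivalExt_le_one h01)

theorem mXSY_le (hX : Measurable X) (hS : ∀ z, Measurable (S z)) (hY : ∀ z, Measurable (Y z)) :
    mXSY X S Y ≤ ‹MeasurableSpace Ω› :=
  (hX.prodMk ((measurable_pi_lambda _ hS).prodMk (measurable_pi_lambda _ hY))).comap_le

theorem indep_comap_Z_mXSY (hrand : Randomization P J X Z S Y) :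
    Indep (MeasurableSpace.comap Z inferInstance) (mXSY X S Y) P :=
  (IndepFun_iff_Indep _ _ _).mp hrand.1

theorem integrable_of_mul_pscore_ae_eq [IsFiniteMeasure P] {z : ℕ} (hz : z ∈ Icc 1 J)
    (hπ : 0 < piZ P Z z) {c : ℝ} (hc : 0 < c) (hcp : ∀ᵐ ω ∂P, c ≤ pscore P X S J z ω)
    {mz F : Ω → ℝ} (hmzP : (fun ω => mz ω * piZ P Z z * pscore P X S J z ω) =ᵐ[P] P[F | mX X]) :
    Integrable mz P := by
  have h := Integrable.of_mul_of_le hc (integrable_condExp.congr hmzP.symm)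
    (by rw [pscore_of_mem hz]; exact integrable_condExp.aestronglyMeasurable) hcp
  simpa [hπ.ne'] using h.div_const (piZ P Z z)

theorem condExp_Y_mul_S_ae_eq [IsFiniteMeasure P] (hset : Setup P J X Z S Y)
    (hrand : Randomization P J X Z S Y) {z : ℕ} (hz : z ∈ Icc 1 J) {mz : Ω → ℝ}
    (hmzP : (fun ω => mz ω * piZ P Z z * pscore P X S J z ω)
      =ᵐ[P] P[fun ω => Yobs J Z Y ω * Sobs J Z S ω * indic Z z ω | mX X]) :
    P[fun ω => Y z ω * S z ω | mX X] =ᵐ[P] fun ω => mz ω * P[S z | mX X] ω := by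
  have hYS : Integrable (fun ω => Y z ω * S z ω) P :=
    (hset.hYint z).mul_bdd (hset.hSm z).aestronglyMeasurable
      (ae_of_all _ fun _ => norm_le_one_of_zero_or_one hset.hS01)
  have hfactor := condExp_mul_ae_eq_of_indep mX_le_mXSY (mXSY_le hset.hX hset.hSm hset.hYm)
    hset.hZ.comap_le ((measurable_mXSY_Y z).mul (measurable_mXSY_S z)).stronglyMeasurable
    (measurable_comap_indic z).stronglyMeasurable (indep_comap_Z_mXSY hrand)
    (integrable_mul_indic hset.hZ hYS z) (integrable_indic hset.hZ z)
  simp only [Yobs_mul_Sobs_mul_indic hz, pscore_of_mem hz] at hmzP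
  filter_upwards [hmzP.trans hfactor] with ω hω
  rw [integral_indic hset.hZ] at hω
  exact mul_left_cancel₀ (hrand.2 z hz).ne' (by linear_combination -hω)

theorem condExp_Y_mul_indG_ae_eq [IsFiniteMeasure P] (hset : Setup P J X Z S Y)
    (hmono : Monotonicity P J S) (hPI : PrincipalIgnorability P J X S Y) {z g : ℕ}
    (hz : z ∈ Icc 1 J) (hg : g ∈ Icc (J - z + 1) J) {mz : Ω → ℝ}
    (hp : ∀ᵐ ω ∂P, P[S z | mX X] ω ≠ 0)
    (hmz : P[fun ω => Y z ω * S z ω | mX X] =ᵐ[P] fun ω => mz ω * P[S z | mX X] ω) :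
    P[fun ω => Y z ω * indG J S g ω | mX X] =ᵐ[P] fun ω => mz ω * eg P X J S g ω := by
  set I := Icc (J - z + 1) J
  have hS := survival_ae_eq_sum_indG hset.hS01 hmono hz
  have hpsum : P[S z | mX X] =ᵐ[P] fun ω => ∑ g' ∈ I, eg P X J S g' ω :=
    (condExp_congr_ae hS).trans (condExp_sum_ae_eq fun g' _ => integrable_indG hset.hSm g')
  have hYSsum : P[fun ω => Y z ω * S z ω | mX X]
      =ᵐ[P] fun ω => ∑ g' ∈ I, P[fun ω' => Y z ω' * indG J S g' ω' | mX X] ω := by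
    refine (condExp_congr_ae ?_).trans
      (condExp_sum_ae_eq fun g' _ => integrable_mul_indG hset.hSm (hset.hYint z) g')
    filter_upwards [hS] with ω hω
    rw [hω, mul_sum]
  have hPIg := (Filter.eventually_all_finset I).mpr fun g' hg' => hPI z hz g hg g' hg'
  filter_upwards [hpsum, hYSsum, hPIg, hmz, hp] with ω hpsum hYSsum hPIg hmz hp
  refine mul_right_cancel₀ hp ?_
  calc P[fun ω' => Y z ω' * indG J S g ω' | mX X] ω * P[S z | mX X] ω
      = ∑ g' ∈ I, P[fun ω' => Y z ω' * indG J S g ω' | mX X] ω * eg P X J S g' ω := by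
        rw [hpsum, mul_sum]
    _ = ∑ g' ∈ I, P[fun ω' => Y z ω' * indG J S g' ω' | mX X] ω * eg P X J S g ω :=
        sum_congr rfl hPIg
    _ = mz ω * eg P X J S g ω * P[S z | mX X] ω := by
        rw [← sum_mul, ← hYSsum, hmz]
        ring

theorem integrable_wterm_mul (hset : Setup P J X Z S Y) {mz : Ω → ℝ}
    (hmz : Integrable mz P) {w : ℕ} (hw : w ≤ J) :
    Integrable (fun ω => wterm P J Z S w ω * mz ω) P := by
  rw [wterm_eq hw]
  refine ((integrable_mul_indic hset.hZ
    (integrable_survivalExt_mul hset.hS01 hset.hSm hmz w) w).const_mul (piZ P Z w)⁻¹).congr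
    (ae_of_all _ fun ω => ?_)
  ring

theorem integral_wterm_mul [IsFiniteMeasure P] (hset : Setup P J X Z S Y)
    (hrand : Randomization P J X Z S Y) {mz : Ω → ℝ} (hmz : Measurable[mX X] mz)
    (hmzi : Integrable mz P) {w : ℕ} (hw : w ≤ J) :
    ∫ ω, wterm P J Z S w ω * mz ω ∂P = ∫ ω, survivalExt S w ω * mz ω ∂P := by
  by_cases hw0 : w = 0
  · simp [wterm, survivalExt, hw0]
  have hπ : piZ P Z w ≠ 0 := (hrand.2 w (mem_Icc.mpr ⟨by omega, hw⟩)).ne'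
  have hTm : Measurable[mXSY X S Y] fun ω => survivalExt S w ω * mz ω :=
    (measurable_mXSY_survivalExt w).mul (hmz.mono mX_le_mXSY le_rfl)
  have hindep := integral_mul_eq_of_indep (mXSY_le hset.hX hset.hSm hset.hYm)
    hset.hZ.comap_le hTm.stronglyMeasurable (measurable_comap_indic w).stronglyMeasurable
    (indep_comap_Z_mXSY hrand)
    (integrable_mul_indic hset.hZ (integrable_survivalExt_mul hset.hS01 hset.hSm hmzi w) w)
    (integrable_indic hset.hZ w)
  calc ∫ ω, wterm P J Z S w ω * mz ω ∂P
      = (piZ P Z w)⁻¹ * ∫ ω, survivalExt S w ω * mz ω * indic Z w ω ∂P := by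
        rw [wterm_eq hw, ← integral_const_mul]
        exact integral_congr_ae (ae_of_all _ fun ω => by ring)
    _ = ∫ ω, survivalExt S w ω * mz ω ∂P := by
        rw [hindep, integral_indic hset.hZ, inv_mul_cancel_left₀ hπ]

theorem integral_mul_indG_eq [IsFiniteMeasure P] (hset : Setup P J X Z S Y)
    (hrand : Randomization P J X Z S Y) (hmono : Monotonicity P J S) {g : ℕ}
    (hg : g ∈ Icc 1 J) {mz : Ω → ℝ} (hmz : Measurable[mX X] mz) (hmzi : Integrable mz P) :
    ∫ ω, mz ω * indG J S g ω ∂P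
      = ∫ ω, (wterm P J Z S (J - g + 1) ω - wterm P J Z S (J - g) ω) * mz ω ∂P := by
  have hg' := mem_Icc.mp hg
  have hT := integrable_survivalExt_mul hset.hS01 hset.hSm hmzi
  calc ∫ ω, mz ω * indG J S g ω ∂P
      = ∫ ω, (survivalExt S (J - g + 1) ω - survivalExt S (J - g) ω) * mz ω ∂P := by
        refine integral_congr_ae ?_
        filter_upwards [indG_ae_eq_sub hset.hS01 hmono hg] with ω hω
        rw [hω, mul_comm]
    _ = ∫ ω, survivalExt S (J - g + 1) ω * mz ω ∂P
          - ∫ ω, survivalExt S (J - g) ω * mz ω ∂P := by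
        simp_rw [sub_mul]
        exact integral_sub (hT _) (hT _)
    _ = ∫ ω, wterm P J Z S (J - g + 1) ω * mz ω ∂P
          - ∫ ω, wterm P J Z S (J - g) ω * mz ω ∂P := by
        rw [integral_wterm_mul hset hrand hmz hmzi (by omega),
          integral_wterm_mul hset hrand hmz hmzi (by omega)]
    _ = ∫ ω, (wterm P J Z S (J - g + 1) ω - wterm P J Z S (J - g) ω) * mz ω ∂P := by
        simp_rw [sub_mul]
        exact (integral_sub (integrable_wterm_mul hset hmzi (by omega))
          (integrable_wterm_mul hset hmzi (by omega))).symm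

end Model

variable [MeasurableSpace Ω] [MeasurableSpace 𝒳]

/-- Under randomization, monotonicity, principal ignorability and
positivity, for every `z ∈ {1,…,J}` and `g ∈ {J−z+1,…,J}`:
`E[Y_z·1(G=g)] = E[(S·1(Z=J−g+1)/π_{J−g+1} − S·1(Z=J−g)/π_{J−g}) · m_z(X)]`,
with the convention that the term `S·1(Z=0)/π_0` is `0` (case `g = J`). -/
theorem statement6 (P : Measure Ω) [IsProbabilityMeasure P] (J : ℕ)
    (X : Ω → 𝒳) (Z : Ω → ℕ) (S Y : ℕ → Ω → ℝ)
    (hset : Setup P J X Z S Y)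
    (hrand : Randomization P J X Z S Y)
    (hmono : Monotonicity P J S)
    (hPI : PrincipalIgnorability P J X S Y)
    (hpos : Positivity P J X S) :
    ∀ z ∈ Finset.Icc 1 J, ∀ g ∈ Finset.Icc (J - z + 1) J,
      ∀ mz : Ω → ℝ, Measurable[mX X] mz →
      ((fun ω => mz ω * piZ P Z z * pscore P X S J z ω)
        =ᵐ[P] P[fun ω => Yobs J Z Y ω * Sobs J Z S ω * indic Z z ω | mX X]) →
      ∫ ω, Y z ω * indG J S g ω ∂P
        = ∫ ω, (wterm P J Z S (J - g + 1) ω - wterm P J Z S (J - g) ω) * mz ω ∂P := by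
  intro z hz g hg mz hmz hmzP
  have hg₁ : g ∈ Icc 1 J := by
    simp only [mem_Icc] at hz hg ⊢
    omega
  have hm : mX X ≤ ‹MeasurableSpace Ω› := hset.hX.comap_le
  obtain ⟨c, hc, hcp⟩ := hpos
  have hmzi := integrable_of_mul_pscore_ae_eq hz (hrand.2 z hz) hc (hcp z hz) hmzP
  have hp : ∀ᵐ ω ∂P, P[S z | mX X] ω ≠ 0 := by
    filter_upwards [hcp z hz] with ω hω
    rw [pscore_of_mem hz] at hω
    exact (hc.trans_le hω).ne'
  have hkey := condExp_Y_mul_indG_ae_eq hset hmono hPI hz hg hp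
    (condExp_Y_mul_S_ae_eq hset hrand hz hmzP)
  calc ∫ ω, Y z ω * indG J S g ω ∂P
      = ∫ ω, P[fun ω => Y z ω * indG J S g ω | mX X] ω ∂P := (integral_condExp hm).symm
    _ = ∫ ω, mz ω * eg P X J S g ω ∂P := integral_congr_ae hkey
    _ = ∫ ω, mz ω * indG J S g ω ∂P :=
        integral_mul_condExp hm hmz.stronglyMeasurable (integrable_mul_indG hset.hSm hmzi g)
          (integrable_indG hset.hSm g)
    _ = _ := integral_mul_indG_eq hset hrand hmono hg₁ hmz hmzi

end TruncationByDeath
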